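/- The homeomorphic embedding relation on finite rooted plane trees whose vertices are labelled by a well-quasi-ordered alphabet is a well-quasi-order. (Kruskal's tree theorem for labelled plane trees.) -/

import Mathlib

/-- A finite rooted plane tree with vertex labels in `A`: a label at the root and an
ordered list of child subtrees (the list order records the plane embedding). -/
inductive PTree (A : Type) : Type
  | node : A → List (PTree A) → PTree A

mutual
  /-- Homeomorphic embedding of labelled plane trees: `T₁` embeds into `T₂` if it embeds
  into one of the subtrees of `T₂` (deleting a root / contracting paths), or if the root
  label of `T₁` is `≤` that of `T₂` and the list of children of `T₁` embeds, preserving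
  the plane order, into the list of children of `T₂` (deleting leaves, reducing labels). -/
  inductive TreeEmb {A : Type} (le : A → A → Prop) : PTree A → PTree A → Prop
    | subtree {t : PTree A} {a : A} {us : List (PTree A)} (u : PTree A) :
        u ∈ us → TreeEmb le t u → TreeEmb le t (.node a us)
    | node {a b : A} {ts us : List (PTree A)} :
        le a b → ListEmb le ts us → TreeEmb le (.node a ts) (.node b us)

  /-- Order-preserving embedding of a list of trees into another (Higman-style). -/
  inductive ListEmb {A : Type} (le : A → A → Prop) :
      List (PTree A) → List (PTree A) → Prop
    | nil {us : List (PTree A)} : ListEmb le [] us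
    | cons {t u : PTree A} {ts us : List (PTree A)} :
        TreeEmb le t u → ListEmb le ts us → ListEmb le (t :: ts) (u :: us)
    | cons_right {u : PTree A} {ts us : List (PTree A)} :
        ListEmb le ts us → ListEmb le ts (u :: us)
end

def IsWQO {X : Type*} (r : X → X → Prop) : Prop :=
  ∀ f : ℕ → X, ∃ i j : ℕ, i < j ∧ r (f i) (f j)

/-! Nash-Williams' minimal bad sequence argument. If a bad sequence of trees existed, there would
be one that is minimal, by size, at every position. The children of its trees are then
well-quasi-ordered: a bad sequence of children, spliced in after the terms preceding its earliest
parent, would be a bad sequence smaller at that position. By Higman's lemma the lists of children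
are well-quasi-ordered too, so along a subsequence with increasing root labels two trees embed
into each other, contradicting badness. -/

namespace PTree

variable {A : Type}

def root : PTree A → A
  | node a _ => a

def children : PTree A → List (PTree A)
  | node _ ts => ts

@[simp]
theorem node_root_children (t : PTree A) : node t.root t.children = t := by
  cases t; rfl

theorem sizeOf_lt_of_mem_children {t u : PTree A} (h : u ∈ t.children) :
    sizeOf u < sizeOf t := by
  cases t with
  | node a ts =>
    have : sizeOf u < sizeOf ts := List.sizeOf_lt_of_mem h
    simp only [node.sizeOf_spec]
    omega

end PTree

section

variable {A : Type} {le : A → A → Prop}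

mutual
theorem TreeEmb.refl [Std.Refl le] : ∀ t : PTree A, TreeEmb le t t
  | .node a ts => .node (_root_.refl a) (ListEmb.refl ts)

theorem ListEmb.refl [Std.Refl le] : ∀ ts : List (PTree A), ListEmb le ts ts
  | [] => .nil
  | t :: ts => .cons (TreeEmb.refl t) (ListEmb.refl ts)
end

mutual
theorem TreeEmb.trans [IsTrans A le] {t u v : PTree A} :
    TreeEmb le t u → TreeEmb le u v → TreeEmb le t v
  | htu, .subtree v₀ hv huv => .subtree v₀ hv (TreeEmb.trans htu huv)
  | .subtree _ hu htu, .node _ hl =>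
    let ⟨v₀, hv, htv⟩ := ListEmb.exists_treeEmb_of_mem hl hu htu
    .subtree v₀ hv htv
  | .node hab hl, .node hbc hl' => .node (_root_.trans hab hbc) (ListEmb.trans hl hl')

theorem ListEmb.trans [IsTrans A le] {ts us vs : List (PTree A)} :
    ListEmb le ts us → ListEmb le us vs → ListEmb le ts vs
  | .nil, _ => .nil
  | .cons htu hl, .cons huv hl' => .cons (TreeEmb.trans htu huv) (ListEmb.trans hl hl')
  | .cons_right hl, .cons _ hl' => .cons_right (ListEmb.trans hl hl')
  | hl, .cons_right hl' => .cons_right (ListEmb.trans hl hl')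

theorem ListEmb.exists_treeEmb_of_mem [IsTrans A le] {t u : PTree A}
    {us vs : List (PTree A)} :
    ListEmb le us vs → u ∈ us → TreeEmb le t u → ∃ v ∈ vs, TreeEmb le t v
  | .cons huv _, .head _, htu => ⟨_, .head _, TreeEmb.trans htu huv⟩
  | .cons _ hl, .tail _ hu, htu =>
    let ⟨v, hv, htv⟩ := ListEmb.exists_treeEmb_of_mem hl hu htu
    ⟨v, .tail _ hv, htv⟩
  | .cons_right hl, hu, htu =>
    let ⟨v, hv, htv⟩ := ListEmb.exists_treeEmb_of_mem hl hu htu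
    ⟨v, .tail _ hv, htv⟩
end

instance [IsPreorder A le] : IsPreorder (PTree A) (TreeEmb le) where
  refl := TreeEmb.refl
  trans _ _ _ := TreeEmb.trans

theorem ListEmb.of_sublistForall₂ {ts us : List (PTree A)}
    (h : List.SublistForall₂ (TreeEmb le) ts us) : ListEmb le ts us := by
  induction h with
  | nil => exact .nil
  | cons htu _ ih => exact .cons htu ih
  | cons_right _ ih => exact .cons_right ih

open Set Set.PartiallyWellOrderedOn

theorem partiallyWellOrderedOn_children_of_isMinBadSeq {f : ℕ → PTree A}
    (hf : IsBadSeq (TreeEmb le) univ f) (hmin : ∀ n, IsMinBadSeq (TreeEmb le) sizeOf univ n f) :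
    {t | ∃ n, t ∈ (f n).children}.PartiallyWellOrderedOn (TreeEmb le) := by
  rw [iff_forall_not_isBadSeq]
  rintro g ⟨hg, hgbad⟩
  choose n hn using hg
  obtain ⟨k, hk⟩ : ∃ k, ∀ k', n k ≤ n k' := ⟨_, fun k' => Function.argmin_le n k'⟩
  have not_emb_child : ∀ i k', i < n k → ¬ TreeEmb le (f i) (g k') := fun i k' hi h =>
    hf.2 i (n k') (hi.trans_le (hk k')) (by
      rw [← PTree.node_root_children (f (n k'))]; exact .subtree _ (hn k') h)
  refine hmin (n k) (fun m => if m < n k then f m else g (k + (m - n k)))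
    (fun m hm => (if_pos hm).symm) ?_ ⟨fun _ => mem_univ _, fun i j hij => ?_⟩
  · simpa using PTree.sizeOf_lt_of_mem_children (hn k)
  · dsimp only
    split_ifs with hi hj hj
    · exact hf.2 i j hij
    · exact not_emb_child i _ hi
    · omega
    · exact hgbad _ _ (by omega)

theorem wellQuasiOrdered_treeEmb [IsPreorder A le] (h : WellQuasiOrdered le) :
    WellQuasiOrdered (TreeEmb le) := by
  rw [← partiallyWellOrderedOn_univ_iff, iff_not_exists_isMinBadSeq sizeOf]
  rintro ⟨f, hf, hmin⟩
  obtain ⟨φ, hroot⟩ := h.exists_monotone_subseq fun n => (f n).root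
  obtain ⟨i, j, hij, hchildren⟩ :=
    (partiallyWellOrderedOn_sublistForall₂ _
      (partiallyWellOrderedOn_children_of_isMinBadSeq hf hmin)).exists_lt
      (f := fun k => (f (φ k)).children) fun k _ ht => ⟨φ k, ht⟩
  apply hf.2 (φ i) (φ j) (φ.strictMono hij)
  rw [← PTree.node_root_children (f (φ i)), ← PTree.node_root_children (f (φ j))]
  exact .node (hroot i j hij.le) (.of_sublistForall₂ hchildren)

end

/-- Kruskal's tree theorem for labelled plane trees: if the alphabet `A` is
well-quasi-ordered by `le`, then homeomorphic embedding is a well-quasi-order on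
finite rooted plane trees labelled by `A`. -/
theorem kruskal_plane_trees {A : Type} (le : A → A → Prop)
    (hrefl : ∀ a, le a a) (htrans : ∀ a b c, le a b → le b c → le a c)
    (hwqo : IsWQO le) :
    IsWQO (TreeEmb le) :=
  have : IsPreorder A le := { refl := hrefl, trans := htrans }
  wellQuasiOrdered_treeEmb hwqo
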